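/- (Corollary 5.6) Let s = 2 and suppose (A,b) is symplectic with b_1 ≠ 0 and b_2 ≠ 0. Then at every point (q,p) ∈ ℝ^n × ℝ^n where the (2n)×(2n) matrix I_{2n} − h²·T is invertible, with T the 2×2 block matrix whose (i,j) block is a_{ij}·(c_i−c_j)·Dg̃(Q_j(q,p)), the Jacobian of the RKN update map satisfies det(DΨ(q,p)) = 1; that is, the two-stage RKN method preserves volume for the second-order system q'' = g̃(q). -/

import Mathlib

open Matrix

/-- The Jacobian matrix of a map `f : ℝ^ι → ℝ^ι` at a point `y`. -/
noncomputable def jac {ι : Type*} [Fintype ι] [DecidableEq ι]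
    (f : (ι → ℝ) → (ι → ℝ)) (y : ι → ℝ) : Matrix ι ι ℝ :=
  LinearMap.toMatrix' ((fderiv ℝ f y).toLinearMap)

/-- The Jacobian matrix of a map `g̃ : ℝ^n → ℝ^n` at a point (same as `jac`, restated
for stage values of the RKN method). -/
noncomputable def jacN {n : ℕ} (f : (Fin n → ℝ) → (Fin n → ℝ)) (y : Fin n → ℝ) :
    Matrix (Fin n) (Fin n) ℝ :=
  LinearMap.toMatrix' ((fderiv ℝ f y).toLinearMap)

/-- A Runge–Kutta pair `(A, b)` is symplectic. -/
def IsSymplecticRK {s : ℕ} (A : Matrix (Fin s) (Fin s) ℝ) (b : Fin s → ℝ) : Prop :=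
  ∀ i j, b i * A i j + b j * A j i - b i * b j = 0

/-
Stack the Jacobians of the stages into `M`. Differentiating the stage equations gives
`(1 - h² T) M = E`, where `E` stacks the matrices `(1, cᵢ h)`, and differentiating the update
gives `DΨ = S + C M`, where `S` is the shear `(q, p) ↦ (q + h p, p)`. By Sylvester's identity
`det (1 + X Y) = det (1 + Y X)`, `det DΨ · det (1 - h² T) = det (1 - h² T + E S⁻¹ C)`, and
`E S⁻¹ C` has blocks `h² bⱼ (cᵢ - cⱼ) Dg̃(Qⱼ)`. With two stages, the identity plus a block matrix
`(kᵢⱼ Dg̃(Qⱼ))` with `kᵢᵢ = 0` has determinant `det (1 - k₂₁ k₁₂ Dg̃(Q₂) Dg̃(Q₁))`. For `1 - h² T`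
one has `kᵢⱼ = -h² aᵢⱼ (cᵢ - cⱼ)`, for `1 - h² T + E S⁻¹ C` one has `kᵢⱼ = h² (bⱼ - aᵢⱼ) (cᵢ - cⱼ)`,
and symplecticity `b₁ a₁₂ + b₂ a₂₁ = b₁ b₂` says exactly `(b₂ - a₁₂) (b₁ - a₂₁) = a₁₂ a₂₁`.
-/

noncomputable def jacobian {ι κ : Type*} [Fintype ι] [DecidableEq ι]
    (f : (ι → ℝ) → (κ → ℝ)) (y : ι → ℝ) : Matrix κ ι ℝ :=
  LinearMap.toMatrix' (fderiv ℝ f y).toLinearMap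

theorem jacobian_mulVec_add_sum {ι κ μ ν σ : Type*} [Fintype ι] [DecidableEq ι] [Fintype κ]
    [Fintype μ] [DecidableEq μ] [Fintype ν] [DecidableEq ν] [Fintype σ]
    (L : Matrix κ ι ℝ) (B : σ → Matrix κ ν ℝ) (g : (μ → ℝ) → (ν → ℝ))
    (Q : σ → (ι → ℝ) → (μ → ℝ)) {y : ι → ℝ}
    (hg : ∀ j, DifferentiableAt ℝ g (Q j y)) (hQ : ∀ j, DifferentiableAt ℝ (Q j) y) :
    jacobian (fun z => L *ᵥ z + ∑ j, B j *ᵥ g (Q j z)) y =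
      L + ∑ j, B j * jacobian g (Q j y) * jacobian (Q j) y := by
  have hD : HasFDerivAt (fun z => L *ᵥ z + ∑ j, B j *ᵥ g (Q j z))
      ((toLin' L).toContinuousLinearMap + ∑ j, (toLin' (B j)).toContinuousLinearMap.comp
        ((fderiv ℝ g (Q j y)).comp (fderiv ℝ (Q j) y))) y :=
    (toLin' L).toContinuousLinearMap.hasFDerivAt.add <| HasFDerivAt.fun_sum fun j _ =>
      (toLin' (B j)).toContinuousLinearMap.hasFDerivAt.comp y
        ((hg j).hasFDerivAt.comp y (hQ j).hasFDerivAt)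
  simp only [jacobian, hD.fderiv, ContinuousLinearMap.toLinearMap_add,
    ContinuousLinearMap.toLinearMap_sum, ContinuousLinearMap.toLinearMap_comp,
    LinearMap.coe_toContinuousLinearMap, map_add, map_sum, LinearMap.toMatrix'_comp,
    LinearMap.toMatrix'_toLin', Matrix.mul_assoc]

namespace Matrix

variable {R σ τ m ι κ : Type*}

def blockCol (M : σ → Matrix m ι R) : Matrix (σ × m) ι R :=
  of fun p q => M p.1 p.2 q

def blockRow (X : σ → Matrix κ m R) : Matrix κ (σ × m) R :=
  of fun x p => X p.1 x p.2

section Mul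

variable [NonUnitalNonAssocSemiring R]

theorem blockRow_mul_blockCol [Fintype σ] [Fintype m] (X : σ → Matrix κ m R)
    (M : σ → Matrix m ι R) :
    blockRow X * blockCol M = ∑ j, X j * M j := by
  ext x q
  simp [blockRow, blockCol, mul_apply, Fintype.sum_prod_type, Matrix.sum_apply]

theorem blockCol_mul_blockRow [Fintype ι] (F : σ → Matrix m ι R) (G : τ → Matrix ι κ R) :
    blockCol F * blockRow G = comp σ τ m κ R (of fun i j => F i * G j) := by
  ext p q
  simp [blockRow, blockCol, mul_apply]

theorem comp_mul_blockCol [Fintype τ] [Fintype κ] (X : Matrix σ τ (Matrix m κ R))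
    (M : τ → Matrix κ ι R) :
    comp σ τ m κ R X * blockCol M = blockCol fun i => ∑ j, X i j * M j := by
  ext p q
  simp [blockCol, mul_apply, Fintype.sum_prod_type, Matrix.sum_apply]

theorem blockCol_mul [Fintype ι] (F : σ → Matrix m ι R) (N : Matrix ι κ R) :
    blockCol F * N = blockCol fun i => F i * N := by
  ext p q
  simp [blockCol, mul_apply]

end Mul

variable [CommRing R]

theorem det_add_mul_mul_det [Fintype m] [Fintype κ] [DecidableEq m] [DecidableEq κ]
    (S : Matrix m m R) (hS : IsUnit S.det) (C : Matrix m κ R) (M : Matrix κ m R)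
    (P : Matrix κ κ R) :
    (S + C * M).det * P.det = S.det * (P + P * M * S⁻¹ * C).det := by
  have hfac : S + C * M = S * (1 + S⁻¹ * C * M) := by
    rw [Matrix.mul_add, Matrix.mul_one, ← Matrix.mul_assoc, ← Matrix.mul_assoc,
      mul_nonsing_inv _ hS, Matrix.one_mul]
  rw [hfac, det_mul, det_one_add_mul_comm, mul_assoc, mul_comm _ P.det, ← det_mul]
  simp only [Matrix.mul_add, Matrix.mul_one, Matrix.mul_assoc]

theorem det_comp_fin_two [Fintype m] [DecidableEq m] (X : Matrix (Fin 2) (Fin 2) (Matrix m m R)) :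
    (comp _ _ _ _ R X).det = (fromBlocks (X 0 0) (X 0 1) (X 1 0) (X 1 1)).det := by
  rw [← det_reindex_self ((finTwoEquiv.prodCongr (Equiv.refl m)).trans (Equiv.boolProdEquivSum m))]
  congr 1
  ext (x | x) (y | y) <;> simp [finTwoEquiv]

theorem det_one_add_comp_fin_two [Fintype m] [DecidableEq m]
    (K : Fin 2 → Fin 2 → R) (hK : ∀ i, K i i = 0) (J : Fin 2 → Matrix m m R) :
    (1 + comp _ _ _ _ R (of fun i j => K i j • J j)).det =
      (1 - (K 1 0 * K 0 1) • (J 1 * J 0)).det := by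
  have hone : 1 + comp _ _ _ _ R (of fun i j => K i j • J j) =
      comp _ _ _ _ R (1 + of fun i j => K i j • J j) := by
    rw [← comp_one]; rfl
  rw [hone, det_comp_fin_two]
  simp [hK, smul_smul]

end Matrix

namespace RKN

variable {m σ : Type*} [Fintype m] [DecidableEq m]

section

variable (m)

/- For `y = (q, p)`, the stage `Qᵢ y` is `stageMatrix (cᵢ) h *ᵥ y + h² ∑ⱼ aᵢⱼ (cᵢ - cⱼ) g̃(Qⱼ y)`,
the update `Ψ y` is `shear h *ᵥ y + ∑ⱼ weightMatrix bⱼ cⱼ h *ᵥ g̃(Qⱼ y)`, and the paper's `T` is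
`couplingMatrix A c (fun j => Dg̃(Qⱼ y))`. -/
def shear (h : ℝ) : Matrix (m ⊕ m) (m ⊕ m) ℝ :=
  fromBlocks 1 (h • 1) 0 1

def stageMatrix (c h : ℝ) : Matrix m (m ⊕ m) ℝ :=
  fromCols 1 ((c * h) • 1)

def weightMatrix (b c h : ℝ) : Matrix (m ⊕ m) m ℝ :=
  fromRows ((h ^ 2 * (b * (1 - c))) • 1) ((h * b) • 1)

end

def couplingMatrix (A : Matrix σ σ ℝ) (c : σ → ℝ) (J : σ → Matrix m m ℝ) :
    Matrix (σ × m) (σ × m) ℝ :=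
  comp σ σ m m ℝ (of fun i j => (A i j * (c i - c j)) • J j)

theorem shear_mulVec (h : ℝ) (y : m ⊕ m → ℝ) :
    shear m h *ᵥ y = Sum.elim (y ∘ Sum.inl + h • y ∘ Sum.inr) (y ∘ Sum.inr) := by
  simp [shear, fromBlocks_mulVec, smul_mulVec]

theorem stageMatrix_mulVec (c h : ℝ) (y : m ⊕ m → ℝ) :
    stageMatrix m c h *ᵥ y = y ∘ Sum.inl + (c * h) • y ∘ Sum.inr := by
  simp [stageMatrix, smul_mulVec]

theorem weightMatrix_mulVec (b c h : ℝ) (v : m → ℝ) :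
    weightMatrix m b c h *ᵥ v = Sum.elim ((h ^ 2 * (b * (1 - c))) • v) ((h * b) • v) := by
  simp [weightMatrix, smul_mulVec]

theorem det_shear (h : ℝ) : (shear m h).det = 1 := by
  simp [shear]

theorem shear_inv (h : ℝ) : (shear m h)⁻¹ = shear m (-h) :=
  inv_eq_right_inv <| by simp [shear, fromBlocks_multiply, ← fromBlocks_one]

theorem stageMatrix_mul_shear_inv_mul_weightMatrix (b c c' h : ℝ) :
    stageMatrix m c h * (shear m h)⁻¹ * weightMatrix m b c' h = (h ^ 2 * (b * (c - c'))) • 1 := by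
  rw [shear_inv, stageMatrix, shear, weightMatrix, fromCols_mul_fromBlocks, fromCols_mul_fromRows]
  simp only [Matrix.one_mul, Matrix.mul_one, Matrix.smul_mul, Matrix.mul_smul, smul_zero, add_zero,
    smul_smul, ← add_smul]
  congr 1
  ring

section

variable [Fintype σ] {h : ℝ} {c : σ → ℝ} {A : Matrix σ σ ℝ} {b : σ → ℝ} {g : (m → ℝ) → (m → ℝ)}
  {Q : σ → ((m ⊕ m) → ℝ) → (m → ℝ)}

theorem jacobian_stage (hg : Differentiable ℝ g) (hQ : ∀ i, Differentiable ℝ (Q i))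
    (hQdef : ∀ i y, Q i y = (y ∘ Sum.inl) + (c i * h) • (y ∘ Sum.inr) +
      h ^ 2 • ∑ j, (A i j * (c i - c j)) • g (Q j y)) (i : σ) (y : (m ⊕ m) → ℝ) :
    jacobian (Q i) y = stageMatrix m (c i) h +
      h ^ 2 • ∑ j, (A i j * (c i - c j)) • (jacobian g (Q j y) * jacobian (Q j) y) := by
  have hQi : Q i = fun z => stageMatrix m (c i) h *ᵥ z +
      ∑ j, ((h ^ 2 * (A i j * (c i - c j))) • (1 : Matrix m m ℝ)) *ᵥ g (Q j z) := by
    funext z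
    simp [hQdef i z, stageMatrix_mulVec, smul_mulVec, Finset.smul_sum, smul_smul]
  rw [hQi, jacobian_mulVec_add_sum _ _ _ _ (fun j => hg _) (fun j => (hQ j).differentiableAt)]
  simp [Finset.smul_sum, smul_smul]

theorem one_sub_smul_couplingMatrix_mul_blockCol [DecidableEq σ] (hg : Differentiable ℝ g)
    (hQ : ∀ i, Differentiable ℝ (Q i))
    (hQdef : ∀ i y, Q i y = (y ∘ Sum.inl) + (c i * h) • (y ∘ Sum.inr) +
      h ^ 2 • ∑ j, (A i j * (c i - c j)) • g (Q j y)) (y : (m ⊕ m) → ℝ) :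
    (1 - h ^ 2 • couplingMatrix A c (fun j => jacobian g (Q j y))) *
        blockCol (fun i => jacobian (Q i) y) = blockCol fun i => stageMatrix m (c i) h := by
  rw [Matrix.sub_mul, Matrix.one_mul, Matrix.smul_mul, couplingMatrix, comp_mul_blockCol]
  ext ⟨i, p⟩ q
  have hi : jacobian (Q i) y - h ^ 2 • ∑ j, ((A i j * (c i - c j)) • jacobian g (Q j y)) *
      jacobian (Q j) y = stageMatrix m (c i) h := by
    rw [jacobian_stage hg hQ hQdef i y]
    simp only [Matrix.smul_mul, add_sub_cancel_right]
  exact congrFun₂ hi p q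

theorem jacobian_update {Ψ : ((m ⊕ m) → ℝ) → ((m ⊕ m) → ℝ)} (hg : Differentiable ℝ g)
    (hQ : ∀ i, Differentiable ℝ (Q i))
    (hΨ : ∀ y, Ψ y = Sum.elim
      ((y ∘ Sum.inl) + h • (y ∘ Sum.inr) + h ^ 2 • ∑ i, (b i * (1 - c i)) • g (Q i y))
      ((y ∘ Sum.inr) + h • ∑ i, b i • g (Q i y))) (y : (m ⊕ m) → ℝ) :
    jacobian Ψ y = shear m h +
      blockRow (fun j => weightMatrix m (b j) (c j) h * jacobian g (Q j y)) *
        blockCol (fun i => jacobian (Q i) y) := by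
  have hΨ' : Ψ = fun z => shear m h *ᵥ z + ∑ j, weightMatrix m (b j) (c j) h *ᵥ g (Q j z) := by
    funext z
    ext (x | x) <;>
      simp [hΨ z, shear_mulVec, weightMatrix_mulVec, Finset.sum_apply, Finset.mul_sum, mul_assoc]
  rw [hΨ', jacobian_mulVec_add_sum _ _ _ _ (fun j => hg _) (fun j => (hQ j).differentiableAt),
    blockRow_mul_blockCol]

end

theorem det_add_stage_correction {h : ℝ} {c : Fin 2 → ℝ} {A : Matrix (Fin 2) (Fin 2) ℝ}
    {b : Fin 2 → ℝ} (hsymp : IsSymplecticRK A b) (J : Fin 2 → Matrix m m ℝ) :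
    (1 - h ^ 2 • couplingMatrix A c J + blockCol (fun i => stageMatrix m (c i) h) *
        (shear m h)⁻¹ * blockRow (fun j => weightMatrix m (b j) (c j) h * J j)).det =
      (1 - h ^ 2 • couplingMatrix A c J).det := by
  have hlhs : 1 - h ^ 2 • couplingMatrix A c J + blockCol (fun i => stageMatrix m (c i) h) *
      (shear m h)⁻¹ * blockRow (fun j => weightMatrix m (b j) (c j) h * J j) =
        1 + comp _ _ _ _ ℝ (of fun i j => (h ^ 2 * ((b j - A i j) * (c i - c j))) • J j) := by
    rw [blockCol_mul, blockCol_mul_blockRow]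
    simp_rw [← Matrix.mul_assoc, stageMatrix_mul_shear_inv_mul_weightMatrix, Matrix.smul_mul,
      Matrix.one_mul]
    ext ⟨i, p⟩ ⟨j, q⟩
    simp only [couplingMatrix, Matrix.add_apply, Matrix.sub_apply, Matrix.smul_apply, comp_apply,
      of_apply, smul_eq_mul]
    ring
  have hrhs : 1 - h ^ 2 • couplingMatrix A c J =
      1 + comp _ _ _ _ ℝ (of fun i j => (-(h ^ 2 * (A i j * (c i - c j)))) • J j) := by
    ext ⟨i, p⟩ ⟨j, q⟩
    simp only [couplingMatrix, Matrix.add_apply, Matrix.sub_apply, Matrix.smul_apply, comp_apply,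
      of_apply, smul_eq_mul]
    ring
  rw [hlhs, hrhs, det_one_add_comp_fin_two _ (by simp), det_one_add_comp_fin_two _ (by simp)]
  congr 3
  linear_combination (h ^ 4 * (c 0 - c 1) ^ 2) * hsymp 0 1

end RKN

theorem stmt_17_general (n : ℕ) (h : ℝ) (c : Fin 2 → ℝ)
    (A : Matrix (Fin 2) (Fin 2) ℝ) (b : Fin 2 → ℝ)
    (hsymp : IsSymplecticRK A b)
    (gt : (Fin n → ℝ) → (Fin n → ℝ)) (hgt : Differentiable ℝ gt)
    (Q : Fin 2 → ((Fin n ⊕ Fin n) → ℝ) → (Fin n → ℝ))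
    (hQ : ∀ i, Differentiable ℝ (Q i))
    (hQdef : ∀ i y, Q i y =
      (y ∘ Sum.inl) + (c i * h) • (y ∘ Sum.inr) +
        h ^ 2 • ∑ j, (A i j * (c i - c j)) • gt (Q j y))
    (Ψ : ((Fin n ⊕ Fin n) → ℝ) → ((Fin n ⊕ Fin n) → ℝ))
    (hΨ : ∀ y, Ψ y = Sum.elim
      ((y ∘ Sum.inl) + h • (y ∘ Sum.inr) + h ^ 2 • ∑ i, (b i * (1 - c i)) • gt (Q i y))
      ((y ∘ Sum.inr) + h • ∑ i, b i • gt (Q i y)))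
    (T : ((Fin n ⊕ Fin n) → ℝ) → Matrix (Fin 2 × Fin n) (Fin 2 × Fin n) ℝ)
    (hT : ∀ y p q, T y p q = A p.1 q.1 * (c p.1 - c q.1) * jacN gt (Q q.1 y) p.2 q.2) :
    ∀ y : (Fin n ⊕ Fin n) → ℝ,
      IsUnit ((1 : Matrix (Fin 2 × Fin n) (Fin 2 × Fin n) ℝ) - h ^ 2 • T y) →
        (jac Ψ y).det = 1 := by
  intro y hy
  have hTy : T y = RKN.couplingMatrix A c fun j => jacobian gt (Q j y) := by
    ext p q
    simp [hT, RKN.couplingMatrix, jacN, jacobian]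
  have hdet := det_add_mul_mul_det (RKN.shear (Fin n) h) (by rw [RKN.det_shear]; exact isUnit_one)
    (blockRow fun j => RKN.weightMatrix (Fin n) (b j) (c j) h * jacobian gt (Q j y))
    (blockCol fun i => jacobian (Q i) y) (1 - h ^ 2 • T y)
  rw [← RKN.jacobian_update hgt hQ hΨ, hTy,
    RKN.one_sub_smul_couplingMatrix_mul_blockCol hgt hQ hQdef, RKN.det_add_stage_correction hsymp,
    RKN.det_shear, one_mul] at hdet
  rw [hTy, isUnit_iff_isUnit_det] at hy
  exact (mul_eq_right₀ hy.ne_zero).mp hdet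

/-- **Corollary 5.6.** Two-stage RKN methods built from a symplectic RK pair with
nonzero weights preserve volume for the second-order system `q'' = g̃(q)`.
The phase space `ℝ^n × ℝ^n` is modelled as `(Fin n ⊕ Fin n) → ℝ`, the `inl`-part
being `q` and the `inr`-part being `p`. -/
theorem stmt_17 (n : ℕ) (h : ℝ) (c : Fin 2 → ℝ)
    (A : Matrix (Fin 2) (Fin 2) ℝ) (b : Fin 2 → ℝ)
    (hsymp : IsSymplecticRK A b) (hb : ∀ i, b i ≠ 0)
    (gt : (Fin n → ℝ) → (Fin n → ℝ)) (hgt : Differentiable ℝ gt)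
    (Q : Fin 2 → ((Fin n ⊕ Fin n) → ℝ) → (Fin n → ℝ))
    (hQ : ∀ i, Differentiable ℝ (Q i))
    (hQdef : ∀ i y, Q i y =
      (y ∘ Sum.inl) + (c i * h) • (y ∘ Sum.inr) +
        h ^ 2 • ∑ j, (A i j * (c i - c j)) • gt (Q j y))
    (Ψ : ((Fin n ⊕ Fin n) → ℝ) → ((Fin n ⊕ Fin n) → ℝ))
    (hΨ : ∀ y, Ψ y = Sum.elim
      ((y ∘ Sum.inl) + h • (y ∘ Sum.inr) + h ^ 2 • ∑ i, (b i * (1 - c i)) • gt (Q i y))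
      ((y ∘ Sum.inr) + h • ∑ i, b i • gt (Q i y)))
    (T : ((Fin n ⊕ Fin n) → ℝ) → Matrix (Fin 2 × Fin n) (Fin 2 × Fin n) ℝ)
    (hT : ∀ y p q, T y p q = A p.1 q.1 * (c p.1 - c q.1) * jacN gt (Q q.1 y) p.2 q.2) :
    ∀ y : (Fin n ⊕ Fin n) → ℝ,
      IsUnit ((1 : Matrix (Fin 2 × Fin n) (Fin 2 × Fin n) ℝ) - h ^ 2 • T y) →
        (jac Ψ y).det = 1 :=
  stmt_17_general n h c A b hsymp gt hgt Q hQ hQdef Ψ hΨ T hT
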